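/- arXiv:2312.00054 — 4 statements merged into one kernel-verified Lean document; each statement's English description precedes it below -/
import Mathlib

section
/- Let M be an MDP\R with fixed initial state s_1 and let r, r̂ be two reward functions such that (a) d^π(r, r̂) ≤ ε for some policy π that is ε̄-near-optimal for the MDP M∪r, i.e., V★_1(s_1;r) − V^π_1(s_1;r) ≤ ε̄, and (b) r̂_h(s,a) ≤ r_h(s,a) for all (h,s,a) ∈ [H]×S×A. Then any policy π̂ that is ε'-near-optimal for M∪r̂, i.e., V★_1(s_1;r̂) − V^π̂_1(s_1;r̂) ≤ ε', satisfies V★_1(s_1;r) − V^π̂_1(s_1;r) ≤ ε + ε' + 2ε̄. -/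
open Finset
open scoped Classical ENNReal NNReal

namespace IRL

/-- `P` is a valid transition kernel: each `P h s a` is a probability
distribution over next states. -/
def IsKernel {S A : Type*} [Fintype S] (P : ℕ → S → A → S → ℝ) : Prop :=
  ∀ h s a, (∀ s', 0 ≤ P h s a s') ∧ ∑ s', P h s a s' = 1

/-- `π` is a valid (Markov, time-dependent, randomized) policy. -/
def IsPolicy {S A : Type*} [Fintype A] (π : ℕ → S → A → ℝ) : Prop :=
  ∀ h s, (∀ a, 0 ≤ π h s a) ∧ ∑ a, π h s a = 1

/-- Value function `V^π_h(s; r)` (steps are 0-based, horizon `H`). -/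
noncomputable def Vval {S A : Type*} [Fintype S] [Fintype A] (H : ℕ)
    (P : ℕ → S → A → S → ℝ) (π : ℕ → S → A → ℝ) (r : ℕ → S → A → ℝ)
    (h : ℕ) (s : S) : ℝ :=
  if hlt : h < H then
    ∑ a, π h s a * (r h s a + ∑ s', P h s a s' * Vval H P π r (h + 1) s')
  else 0
termination_by H - h
decreasing_by omega

/-- Q-function `Q^π_h(s, a; r)`. -/
noncomputable def Qval {S A : Type*} [Fintype S] [Fintype A] (H : ℕ)
    (P : ℕ → S → A → S → ℝ) (π : ℕ → S → A → ℝ) (r : ℕ → S → A → ℝ)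
    (h : ℕ) (s : S) (a : A) : ℝ :=
  if h < H then r h s a + ∑ s', P h s a s' * Vval H P π r (h + 1) s' else 0

/-- `π` is an optimal policy of the MDP `M ∪ r`: its advantage function is
nonpositive at every `(h, s, a)`. -/
def IsOptimal {S A : Type*} [Fintype S] [Fintype A] (H : ℕ)
    (P : ℕ → S → A → S → ℝ) (r : ℕ → S → A → ℝ) (π : ℕ → S → A → ℝ) : Prop :=
  ∀ h, h < H → ∀ s a, Qval H P π r h s a ≤ Vval H P π r h s

/-- `r` is a feasible reward for the IRL problem `(M, πE)`. -/
def Feasible {S A : Type*} [Fintype S] [Fintype A] (H : ℕ)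
    (P : ℕ → S → A → S → ℝ) (πE : ℕ → S → A → ℝ) (r : ℕ → S → A → ℝ) : Prop :=
  IsOptimal H P r πE

/-- State visitation probability `d^π_h(s)`, starting from `s1`. -/
noncomputable def dvisit {S A : Type*} [Fintype S] [Fintype A]
    (P : ℕ → S → A → S → ℝ) (π : ℕ → S → A → ℝ) (s1 : S) : ℕ → S → ℝ
  | 0 => fun s => if s = s1 then 1 else 0
  | h + 1 => fun s' => ∑ s, ∑ a, dvisit P π s1 h s * π h s a * P h s a s'

/-- State-action visitation probability `d^π_h(s, a)`. -/
noncomputable def dvisitSA {S A : Type*} [Fintype S] [Fintype A]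
    (P : ℕ → S → A → S → ℝ) (π : ℕ → S → A → ℝ) (s1 : S)
    (h : ℕ) (s : S) (a : A) : ℝ :=
  dvisit P π s1 h s * π h s a

/-- The ground-truth reward mapping `R★` of the IRL problem `(M, πE)`:
`[R★(V,A)]_h(s,a) = -A_h(s,a)·1{a ∉ supp πE_h(·|s)} + V_h(s) - [P_h V_{h+1}](s,a)`. -/
noncomputable def RStar {S A : Type*} [Fintype S] [Fintype A]
    (P : ℕ → S → A → S → ℝ) (πE : ℕ → S → A → ℝ)
    (V : ℕ → S → ℝ) (Adv : ℕ → S → A → ℝ) : ℕ → S → A → ℝ := fun h s a =>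
  -(Adv h s a) * (if πE h s a = 0 then 1 else 0) + V h s -
    ∑ s', P h s a s' * V (h + 1) s'

/-- The parameter class `V̄` of bounded "value functions" (0-based steps; the
bound `H - h` in particular forces `V h = 0` for `h ≥ H`, i.e. `V_{H+1} = 0`). -/
def Vbar (S : Type*) (H : ℕ) : Set (ℕ → S → ℝ) :=
  {V | ∀ h s, |V h s| ≤ ((H - h : ℕ) : ℝ)}

/-- The parameter class `Ā` of bounded nonnegative "advantage functions". -/
def Abar (S A : Type*) (H : ℕ) : Set (ℕ → S → A → ℝ) :=
  {Adv | ∀ h s a, 0 ≤ Adv h s a ∧ Adv h s a ≤ ((H - h : ℕ) : ℝ)}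

/-- Optimal value `V★_1(s1; r)`. -/
noncomputable def Vstar {S A : Type*} [Fintype S] [Fintype A] (H : ℕ)
    (P : ℕ → S → A → S → ℝ) (r : ℕ → S → A → ℝ) (s1 : S) : ℝ :=
  ⨆ π : {π : ℕ → S → A → ℝ // IsPolicy π}, Vval H P π.1 r 0 s1

/-- The base-metric bound `d^π(r, r') ≤ ε`, stated pointwise over steps `h < H`
(recall `d^π(r,r') = max_{h} E_{s_h ∼ d^π_h} |V^π_h(s_h;r) - V^π_h(s_h;r')|`). -/
def dpiLe {S A : Type*} [Fintype S] [Fintype A] (H : ℕ)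
    (P : ℕ → S → A → S → ℝ) (π : ℕ → S → A → ℝ) (s1 : S)
    (r r' : ℕ → S → A → ℝ) (ε : ℝ) : Prop :=
  ∀ h, h < H →
    ∑ s, dvisit P π s1 h s * |Vval H P π r h s - Vval H P π r' h s| ≤ ε

/-- The expert policy is `Δ`-well-posed. -/
def WellPosed {S A : Type*} (H : ℕ) (πE : ℕ → S → A → ℝ) (Δ : ℝ) : Prop :=
  ∀ h, h < H → ∀ s a, πE h s a ≠ 0 → Δ ≤ πE h s a

/-- `πeval` satisfies `C★` (average-form) single-policy concentrability with
respect to `πb` (with the convention `0/0 = 0`). -/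
def Concentrable {S A : Type*} [Fintype S] [Fintype A] (H : ℕ)
    (P : ℕ → S → A → S → ℝ) (πeval πb : ℕ → S → A → ℝ) (s1 : S)
    (Cstar : ℝ) : Prop :=
  (∀ h, h < H → ∀ s a, dvisitSA P πb s1 h s a = 0 → dvisitSA P πeval s1 h s a = 0) ∧
  (1 / ((H : ℝ) * (Fintype.card S : ℝ))) *
      ∑ h ∈ Finset.range H, ∑ s, ∑ a,
        dvisitSA P πeval s1 h s a / dvisitSA P πb s1 h s a ≤ Cstar

lemma r_le_sum_abs {S A : Type*} [Fintype S] [Fintype A] (H : ℕ)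
    (r : ℕ → S → A → ℝ) {h : ℕ} (hh : h < H) (s : S) (a : A) :
    r h s a ≤ ∑ h' ∈ Finset.range H, ∑ s', ∑ a', |r h' s' a'| := by
  calc r h s a ≤ |r h s a| := le_abs_self _
    _ ≤ ∑ a', |r h s a'| := by
        refine Finset.single_le_sum (f := fun a' => |r h s a'|)
          (fun _ _ => abs_nonneg _) (Finset.mem_univ a)
    _ ≤ ∑ s', ∑ a', |r h s' a'| := by
        refine Finset.single_le_sum (f := fun s' => ∑ a', |r h s' a'|)
          (fun _ _ => Finset.sum_nonneg fun _ _ => abs_nonneg _) (Finset.mem_univ s)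
    _ ≤ ∑ h' ∈ Finset.range H, ∑ s', ∑ a', |r h' s' a'| := by
        refine Finset.single_le_sum (f := fun h' => ∑ s', ∑ a', |r h' s' a'|)
          (fun _ _ => Finset.sum_nonneg fun _ _ =>
            Finset.sum_nonneg fun _ _ => abs_nonneg _) (Finset.mem_range.2 hh)

lemma Vval_mono {S A : Type*} [Fintype S] [Fintype A] (H : ℕ)
    (P : ℕ → S → A → S → ℝ) (π : ℕ → S → A → ℝ) (r r' : ℕ → S → A → ℝ)
    (hP : IsKernel P) (hπ : IsPolicy π)
    (hr : ∀ h, h < H → ∀ s a, r' h s a ≤ r h s a) :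
    ∀ h s, Vval H P π r' h s ≤ Vval H P π r h s := by
  suffices hmain : ∀ n h, H - h ≤ n → ∀ s, Vval H P π r' h s ≤ Vval H P π r h s by
    intro h s; exact hmain (H - h) h le_rfl s
  intro n
  induction n with
  | zero =>
    intro h hn s
    rw [Vval, Vval]
    have : ¬ h < H := by omega
    simp [this]
  | succ n ih =>
    intro h hn s
    rw [Vval, Vval]
    by_cases hlt : h < H
    · simp only [hlt, dif_pos]
      refine Finset.sum_le_sum fun a _ => ?_
      refine mul_le_mul_of_nonneg_left ?_ ((hπ h s).1 a)
      refine add_le_add (hr h hlt s a) ?_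
      refine Finset.sum_le_sum fun s' _ => ?_
      exact mul_le_mul_of_nonneg_left (ih (h + 1) (by omega) s') ((hP h s a).1 s')
    · simp [hlt]

lemma Vval_le_bound {S A : Type*} [Fintype S] [Fintype A] (H : ℕ)
    (P : ℕ → S → A → S → ℝ) (π : ℕ → S → A → ℝ) (r : ℕ → S → A → ℝ)
    (hP : IsKernel P) (hπ : IsPolicy π) (R : ℝ) (hR : 0 ≤ R)
    (hr : ∀ h, h < H → ∀ s a, r h s a ≤ R) :
    ∀ h s, Vval H P π r h s ≤ ((H - h : ℕ) : ℝ) * R := by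
  suffices hmain : ∀ n h, H - h ≤ n → ∀ s,
      Vval H P π r h s ≤ ((H - h : ℕ) : ℝ) * R by
    intro h s; exact hmain (H - h) h le_rfl s
  intro n
  induction n with
  | zero =>
    intro h hn s
    have h0 : H - h = 0 := by omega
    have : ¬ h < H := by omega
    rw [Vval]
    simp [this, h0]
  | succ n ih =>
    intro h hn s
    rw [Vval]
    by_cases hlt : h < H
    · simp only [hlt, dif_pos]
      have hcast : ((H - h : ℕ) : ℝ) = ((H - (h + 1) : ℕ) : ℝ) + 1 := by
        have : H - h = (H - (h + 1)) + 1 := by omega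
        rw [this]; push_cast; ring
      have hstep : ∀ a : A, r h s a + ∑ s', P h s a s' * Vval H P π r (h + 1) s'
          ≤ ((H - h : ℕ) : ℝ) * R := by
        intro a
        have hin : ∑ s', P h s a s' * Vval H P π r (h + 1) s'
            ≤ ((H - (h + 1) : ℕ) : ℝ) * R := by
          calc ∑ s', P h s a s' * Vval H P π r (h + 1) s'
              ≤ ∑ s', P h s a s' * (((H - (h + 1) : ℕ) : ℝ) * R) := by
                refine Finset.sum_le_sum fun s' _ => ?_
                exact mul_le_mul_of_nonneg_left (ih (h + 1) (by omega) s')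
                  ((hP h s a).1 s')
            _ = ((H - (h + 1) : ℕ) : ℝ) * R := by
                rw [← Finset.sum_mul, (hP h s a).2, one_mul]
        have := hr h hlt s a
        rw [hcast]; nlinarith
      calc ∑ a, π h s a * (r h s a + ∑ s', P h s a s' * Vval H P π r (h + 1) s')
          ≤ ∑ a, π h s a * (((H - h : ℕ) : ℝ) * R) := by
            refine Finset.sum_le_sum fun a _ => ?_
            exact mul_le_mul_of_nonneg_left (hstep a) ((hπ h s).1 a)
        _ = ((H - h : ℕ) : ℝ) * R := by
            rw [← Finset.sum_mul, (hπ h s).2, one_mul]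
    · have h0 : H - h = 0 := by omega
      simp [hlt, h0]

lemma Vval_le_Vstar {S A : Type*} [Fintype S] [Fintype A] (H : ℕ)
    (P : ℕ → S → A → S → ℝ) (r : ℕ → S → A → ℝ) (s1 : S)
    (hP : IsKernel P) (π' : ℕ → S → A → ℝ) (hπ' : IsPolicy π') :
    Vval H P π' r 0 s1 ≤ Vstar H P r s1 := by
  have : Nonempty {π : ℕ → S → A → ℝ // IsPolicy π} := ⟨⟨π', hπ'⟩⟩
  have hbdd : BddAbove (Set.range fun p : {π : ℕ → S → A → ℝ // IsPolicy π} =>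
      Vval H P p.1 r 0 s1) := by
    refine ⟨((H - 0 : ℕ) : ℝ) * ∑ h' ∈ Finset.range H, ∑ s', ∑ a', |r h' s' a'|, ?_⟩
    rintro x ⟨p, rfl⟩
    exact Vval_le_bound H P p.1 r hP p.2 _
      (Finset.sum_nonneg fun _ _ => Finset.sum_nonneg fun _ _ =>
        Finset.sum_nonneg fun _ _ => abs_nonneg _)
      (fun h hh s a => r_le_sum_abs H r hh s a) 0 s1
  exact le_ciSup hbdd (⟨π', hπ'⟩ : {π : ℕ → S → A → ℝ // IsPolicy π})

/-- planning with an estimated reward: if `d^π(r, r̂) ≤ ε` for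
some `ε̄`-near-optimal policy `π` of `M ∪ r`, and `r̂ ≤ r` pointwise, then any
`ε'`-near-optimal policy `π̂` of `M ∪ r̂` is `(ε + ε' + 2ε̄)`-near-optimal for
`M ∪ r`. -/
theorem planning_with_estimated_reward {S A : Type*} [Fintype S] [Fintype A]
    (H : ℕ) (hH : 1 ≤ H) (P : ℕ → S → A → S → ℝ) (s1 : S)
    (r rhat : ℕ → S → A → ℝ) (π πhat : ℕ → S → A → ℝ) (ε εbar ε' : ℝ)
    (hP : IsKernel P) (hπ : IsPolicy π) (hπhat : IsPolicy πhat)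
    (ha : dpiLe H P π s1 r rhat ε)
    (hnear : Vstar H P r s1 - Vval H P π r 0 s1 ≤ εbar)
    (hmono : ∀ h, h < H → ∀ s a, rhat h s a ≤ r h s a)
    (hnear' : Vstar H P rhat s1 - Vval H P πhat rhat 0 s1 ≤ ε') :
    Vstar H P r s1 - Vval H P πhat r 0 s1 ≤ ε + ε' + 2 * εbar := by
  have h0lt : 0 < H := hH
  have h2 : |Vval H P π r 0 s1 - Vval H P π rhat 0 s1| ≤ ε := by
    have := ha 0 h0lt
    have hsum : ∑ s, dvisit P π s1 0 s *
        |Vval H P π r 0 s - Vval H P π rhat 0 s|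
        = |Vval H P π r 0 s1 - Vval H P π rhat 0 s1| := by
      simp [dvisit, ite_mul]
    linarith [hsum ▸ this]
  have h2' : Vval H P π r 0 s1 - Vval H P π rhat 0 s1 ≤ ε :=
    le_trans (le_abs_self _) h2
  have h3 : Vval H P π rhat 0 s1 ≤ Vstar H P rhat s1 :=
    Vval_le_Vstar H P rhat s1 hP π hπ
  have h5 : Vval H P πhat rhat 0 s1 ≤ Vval H P πhat r 0 s1 :=
    Vval_mono H P πhat r rhat hP hπhat hmono 0 s1
  have h6 : Vval H P π r 0 s1 ≤ Vstar H P r s1 :=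
    Vval_le_Vstar H P r s1 hP π hπ
  linarith

end IRL
end

section
/- There exists a base metric d on reward functions (namely d(r,r') = |r_1(s̄,ā) − r'_1(s̄,ā)| for a fixed state-action pair (s̄,ā)) with the following property: for every IRL problem (M, π^E) with |S| ≥ 2 and horizon H ≥ 2, there exists another IRL problem (M̂, π̂^E) on the same state space, action space and horizon such that D^H(𝓡★, 𝓡̂) = 0 while D^M(R★, R̂) ≥ 1/2, where 𝓡★, 𝓡̂ are the reward sets induced by the ground-truth reward mappings R★, R̂ of (M,π^E) and (M̂,π̂^E) respectively, D^H is the Hausdorff metric induced by d, and D^M is the mapping-based metric induced by d. -/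
/-!
At `(0, s̄, ā)` a reward of the set depends on `V 1` only through its mean under
`P₀(· | s̄, ā)`, and replacing `V 1` by that constant keeps the parameter admissible; so every
reward of one problem is matched exactly by a reward of the other, whatever the two kernels,
and the Hausdorff distance vanishes. The mapping distance compares the problems at the same
parameter instead: redirecting the transition from `(0, s̄, ā)` onto a state `t` of
probability at most `1 / 2` and taking `V` the indicator of `(1, t)` yields the rewards
`-P₀(t | s̄, ā)` and `-1`.
-/

open Finset
open scoped Classical ENNReal NNReal

namespace IRL

lemma exists_le_half_of_sum_eq_one {S : Type*} [Fintype S] (hS : 2 ≤ Fintype.card S)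
    {p : S → ℝ} (hp : ∑ t, p t = 1) : ∃ t, p t ≤ 1 / 2 := by
  have hne : (Finset.univ : Finset S).Nonempty :=
    Finset.univ_nonempty_iff.mpr (Fintype.card_pos_iff.mp (by omega))
  have hsum : ∑ t, p t ≤ ∑ _t : S, (1 / 2 : ℝ) := by
    rw [hp, Finset.sum_const, Finset.card_univ, nsmul_eq_mul]
    have : (2 : ℝ) ≤ Fintype.card S := by exact_mod_cast hS
    linarith
  simpa using Finset.exists_le_of_sum_le hne hsum

lemma abs_sum_mul_le_of_abs_le {S : Type*} [Fintype S] {w f : S → ℝ} {B : ℝ}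
    (hw : ∀ t, 0 ≤ w t) (hw1 : ∑ t, w t = 1) (hf : ∀ t, |f t| ≤ B) :
    |∑ t, w t * f t| ≤ B :=
  calc |∑ t, w t * f t| ≤ ∑ t, |w t * f t| := Finset.abs_sum_le_sum_abs _ _
    _ = ∑ t, w t * |f t| := by simp only [abs_mul, abs_of_nonneg (hw _)]
    _ ≤ ∑ t, w t * B := Finset.sum_le_sum fun t _ => mul_le_mul_of_nonneg_left (hf t) (hw t)
    _ = B := by rw [← Finset.sum_mul, hw1, one_mul]

section Parameters

variable {S A : Type*} {H : ℕ}

lemma zero_mem_Vbar : (0 : ℕ → S → ℝ) ∈ Vbar S H := fun _ _ => by simp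

lemma zero_mem_Abar : (0 : ℕ → S → A → ℝ) ∈ Abar S A H := fun _ _ _ => by simp

lemma update_mem_Vbar {V : ℕ → S → ℝ} (hV : V ∈ Vbar S H) {k : ℕ} {f : S → ℝ}
    (hf : ∀ s, |f s| ≤ ((H - k : ℕ) : ℝ)) : Function.update V k f ∈ Vbar S H := by
  intro j s
  rcases eq_or_ne j k with rfl | hj
  · simpa using hf s
  · simpa [Function.update_of_ne hj] using hV j s

end Parameters

noncomputable def redirect {S A : Type*} (P : ℕ → S → A → S → ℝ) (h₀ : ℕ) (s₀ : S) (a₀ : A)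
    (t₀ : S) : ℕ → S → A → S → ℝ := fun h s a =>
  if h = h₀ ∧ s = s₀ ∧ a = a₀ then Pi.single t₀ 1 else P h s a

lemma redirect_self {S A : Type*} (P : ℕ → S → A → S → ℝ) (h₀ : ℕ) (s₀ : S) (a₀ : A)
    (t₀ : S) : redirect P h₀ s₀ a₀ t₀ h₀ s₀ a₀ = Pi.single t₀ 1 := by
  simp [redirect]

lemma IsKernel.redirect {S A : Type*} [Fintype S] {P : ℕ → S → A → S → ℝ} (hP : IsKernel P)
    (h₀ : ℕ) (s₀ : S) (a₀ : A) (t₀ : S) : IsKernel (redirect P h₀ s₀ a₀ t₀) := by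
  intro h s a
  unfold IRL.redirect
  split_ifs
  · exact ⟨fun t => by by_cases ht : t = t₀ <;> simp [ht], by simp⟩
  · exact hP h s a

section RewardMapping

variable {S A : Type*} [Fintype S] [Fintype A]

lemma exists_RStar_eq {H h : ℕ} {s : S} {a : A} {P Q : ℕ → S → A → S → ℝ}
    (πE : ℕ → S → A → ℝ) (hP : ∀ t, 0 ≤ P h s a t) (hP1 : ∑ t, P h s a t = 1)
    (hQ1 : ∑ t, Q h s a t = 1) {V : ℕ → S → ℝ} {Adv : ℕ → S → A → ℝ}
    (hV : V ∈ Vbar S H) (hAdv : Adv ∈ Abar S A H) :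
    ∃ q : ↥(Vbar S H ×ˢ Abar S A H),
      RStar Q πE q.1.1 q.1.2 h s a = RStar P πE V Adv h s a := by
  set c := ∑ t, P h s a t * V (h + 1) t
  have hc : |c| ≤ ((H - (h + 1) : ℕ) : ℝ) := abs_sum_mul_le_of_abs_le hP hP1 (hV (h + 1))
  refine ⟨⟨(Function.update V (h + 1) fun _ => c, Adv),
    update_mem_Vbar hV fun _ => hc, hAdv⟩, ?_⟩
  simp only [RStar, Function.update_self, Function.update_of_ne (Nat.succ_ne_self h).symm,
    ← Finset.sum_mul, hQ1, one_mul, c]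

lemma RStar_single_succ (P : ℕ → S → A → S → ℝ) (πE : ℕ → S → A → ℝ) (h : ℕ) (s : S)
    (a : A) (t : S) : RStar P πE (Pi.single (h + 1) (Pi.single t 1)) 0 h s a = -P h s a t := by
  simp [RStar, Pi.single_apply]

end RewardMapping

lemma iSup_iInf_eq_zero_of_forall_exists {ι κ : Sort*} {f : ι → κ → ℝ≥0∞}
    (h : ∀ i, ∃ k, f i k = 0) : ⨆ i, ⨅ k, f i k = 0 :=
  ENNReal.iSup_eq_zero.mpr fun i =>
    let ⟨k, hk⟩ := h i
    le_antisymm (iInf_le_of_le k hk.le) zero_le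

/-- there is a base metric `d` (namely
`d(r, r') = |r_1(s̄, ā) - r'_1(s̄, ā)|` for a fixed state-action pair) such that
for every IRL problem `(M, πE)` with `|S| ≥ 2` and `H ≥ 2` there is another IRL
problem `(M̂, π̂E)` with `D^H(𝓡★, 𝓡̂) = 0` but `D^M(R★, R̂) ≥ 1/2`. -/
theorem mapping_metric_strictly_stronger {S A : Type*} [Fintype S] [Fintype A]
    [Nonempty A] (H : ℕ) (hS : 2 ≤ Fintype.card S) (hH : 2 ≤ H) :
    ∃ d : (ℕ → S → A → ℝ) → (ℕ → S → A → ℝ) → ℝ≥0,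
      (∃ sbar : S, ∃ abar : A, ∀ r r' : ℕ → S → A → ℝ,
        (d r r' : ℝ) = |r 0 sbar abar - r' 0 sbar abar|) ∧
      ∀ (P : ℕ → S → A → S → ℝ) (πE : ℕ → S → A → ℝ),
        IsKernel P → IsPolicy πE →
        ∃ (Phat : ℕ → S → A → S → ℝ) (πEhat : ℕ → S → A → ℝ),
          IsKernel Phat ∧ IsPolicy πEhat ∧
          max
            (⨆ p : ↥(Vbar S H ×ˢ Abar S A H), ⨅ q : ↥(Vbar S H ×ˢ Abar S A H),
              (d (RStar P πE p.1.1 p.1.2) (RStar Phat πEhat q.1.1 q.1.2) : ℝ≥0∞))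
            (⨆ q : ↥(Vbar S H ×ˢ Abar S A H), ⨅ p : ↥(Vbar S H ×ˢ Abar S A H),
              (d (RStar P πE p.1.1 p.1.2) (RStar Phat πEhat q.1.1 q.1.2) : ℝ≥0∞))
            = 0 ∧
          (1 / 2 : ℝ≥0∞) ≤
            ⨆ p : ↥(Vbar S H ×ˢ Abar S A H),
              (d (RStar P πE p.1.1 p.1.2) (RStar Phat πEhat p.1.1 p.1.2) : ℝ≥0∞) := by
  obtain ⟨sbar⟩ : Nonempty S := Fintype.card_pos_iff.mp (by omega)
  obtain ⟨abar⟩ := ‹Nonempty A›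
  refine ⟨fun r r' => nndist (r 0 sbar abar) (r' 0 sbar abar),
    ⟨sbar, abar, fun r r' => Real.dist_eq _ _⟩, fun P πE hP hπE => ?_⟩
  obtain ⟨t, ht⟩ := exists_le_half_of_sum_eq_one hS (hP 0 sbar abar).2
  have hPhat := hP.redirect 0 sbar abar t
  refine ⟨redirect P 0 sbar abar t, πE, hPhat, hπE, ?_, ?_⟩
  · simp only [← edist_nndist]
    rw [iSup_iInf_eq_zero_of_forall_exists fun p => ?_,
      iSup_iInf_eq_zero_of_forall_exists fun q => ?_, max_self]
    · obtain ⟨p', hp'⟩ := exists_RStar_eq πE (hPhat 0 sbar abar).1 (hPhat 0 sbar abar).2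
        (hP 0 sbar abar).2 q.2.1 q.2.2
      exact ⟨p', edist_eq_zero.mpr hp'⟩
    · obtain ⟨q', hq'⟩ := exists_RStar_eq πE (hP 0 sbar abar).1 (hP 0 sbar abar).2
        (hPhat 0 sbar abar).2 p.2.1 p.2.2
      exact ⟨q', edist_eq_zero.mpr hq'.symm⟩
  · have hV : Pi.single 1 (Pi.single t 1) ∈ Vbar S H :=
      update_mem_Vbar zero_mem_Vbar fun s => by
        by_cases hs : s = t <;> simp [hs]; omega
    refine le_iSup_of_le ⟨(Pi.single 1 (Pi.single t 1), 0), hV, zero_mem_Abar⟩ ?_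
    simp only [← edist_nndist, edist_dist, Real.dist_eq, RStar_single_succ, redirect_self,
      Pi.single_eq_same]
    rw [show (1 / 2 : ℝ≥0∞) = ENNReal.ofReal (1 / 2) by simp]
    exact ENNReal.ofReal_le_ofReal (by rw [abs_of_nonneg] <;> linarith)

end IRL
end

section
/- For any two IRL problems τ = (M, π^E) and τ̂ = (M̂, π̂^E) defined on the same finite state space, action space and horizon (the transitions of M and M̂ may differ arbitrarily), if the expert policies coincide, π^E = π̂^E, then D^L(τ, τ̂) = 0. -/
open Finset
open scoped Classical ENNReal NNReal

namespace IRL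

/-- The base metric `d^π(r, r')` as a supremum over steps. -/
noncomputable def dpiSup {S A : Type*} [Fintype S] [Fintype A] (H : ℕ)
    (P : ℕ → S → A → S → ℝ) (π : ℕ → S → A → ℝ) (s1 : S)
    (r r' : ℕ → S → A → ℝ) : ℝ :=
  ⨆ h : Fin H, ∑ s, dvisit P π s1 h s * |Vval H P π r h s - Vval H P π r' h s|

/-- The metric `D^all_Θ` between two reward mappings: the supremum over all
policies `π` and all parameters `(V, A) ∈ Θ` of `d^π(R(V,A), R'(V,A))`. -/
noncomputable def DallTheta {S A : Type*} [Fintype S] [Fintype A] (H : ℕ)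
    (P : ℕ → S → A → S → ℝ) (s1 : S)
    (Θ : Set ((ℕ → S → ℝ) × (ℕ → S → A → ℝ)))
    (R R' : (ℕ → S → ℝ) → (ℕ → S → A → ℝ) → ℕ → S → A → ℝ) : ℝ :=
  ⨆ π : {π : ℕ → S → A → ℝ // IsPolicy π}, ⨆ p : Θ,
    dpiSup H P π.1 s1 (R p.1.1 p.1.2) (R' p.1.1 p.1.2)

/-- Lindner et al.'s metric `D^L` between two IRL problems
`τ = (M, πE)` and `τ̂ = (M̂, π̂E)` (all Q-values evaluated in `M ∪ r`). -/
noncomputable def DL {S A : Type*} [Fintype S] [Fintype A] (H : ℕ)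
    (P Phat : ℕ → S → A → S → ℝ) (πE πEhat : ℕ → S → A → ℝ) (s1 : S) : ℝ :=
  max
    (⨆ r : {r : ℕ → S → A → ℝ // Feasible H P πE r},
      ⨅ rh : {r : ℕ → S → A → ℝ // Feasible H Phat πEhat r},
        ⨆ πs : {π : ℕ → S → A → ℝ // IsPolicy π ∧ IsOptimal H P r.1 π},
          ⨆ πh : {π : ℕ → S → A → ℝ // IsPolicy π ∧ IsOptimal H Phat rh.1 π},
            ⨆ a : A, |Qval H P πs.1 r.1 0 s1 a - Qval H P πh.1 r.1 0 s1 a|)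
    (⨆ rh : {r : ℕ → S → A → ℝ // Feasible H Phat πEhat r},
      ⨅ r : {r : ℕ → S → A → ℝ // Feasible H P πE r},
        ⨆ πs : {π : ℕ → S → A → ℝ // IsPolicy π ∧ IsOptimal H P r.1 π},
          ⨆ πh : {π : ℕ → S → A → ℝ // IsPolicy π ∧ IsOptimal H Phat rh.1 π},
            ⨆ a : A, |Qval H P πs.1 r.1 0 s1 a - Qval H P πh.1 r.1 0 s1 a|)

/-- Robust form of the bound `D^L(τ, τ̂) ≤ ε`. -/
def DLle {S A : Type*} [Fintype S] [Fintype A] (H : ℕ)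
    (P Phat : ℕ → S → A → S → ℝ) (πE πEhat : ℕ → S → A → ℝ) (s1 : S)
    (ε : ℝ) : Prop :=
  (∀ r, Feasible H P πE r → ∃ rh, Feasible H Phat πEhat rh ∧
    ∀ πs, IsPolicy πs → IsOptimal H P r πs →
      ∀ πh, IsPolicy πh → IsOptimal H Phat rh πh →
        ∀ a, |Qval H P πs r 0 s1 a - Qval H P πh r 0 s1 a| ≤ ε) ∧
  (∀ rh, Feasible H Phat πEhat rh → ∃ r, Feasible H P πE r ∧
    ∀ πs, IsPolicy πs → IsOptimal H P r πs →
      ∀ πh, IsPolicy πh → IsOptimal H Phat rh πh →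
        ∀ a, |Qval H P πs r 0 s1 a - Qval H P πh r 0 s1 a| ≤ ε)


section Aux

variable {S A : Type*} [Fintype S] [Fintype A]

/-- Downward induction from the horizon. -/
lemma downInd (H : ℕ) (Φ : ℕ → Prop) (h0 : ∀ h, H ≤ h → Φ h)
    (hstep : ∀ h, h < H → Φ (h + 1) → Φ h) : ∀ h, Φ h := by
  have key : ∀ d h, H ≤ h + d → Φ h := by
    intro d
    induction d with
    | zero => intro h hh; exact h0 h (by omega)
    | succ d ih =>
      intro h hh
      rcases lt_or_ge h H with h1 | h1
      · exact hstep h h1 (ih (h + 1) (by omega))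
      · exact h0 h h1
  exact fun h => key H h (by omega)

lemma Vval_of_ge (H : ℕ) (P : ℕ → S → A → S → ℝ) (π : ℕ → S → A → ℝ)
    (r : ℕ → S → A → ℝ) {h : ℕ} (s : S) (hh : H ≤ h) : Vval H P π r h s = 0 := by
  rw [Vval]; simp [Nat.not_lt.mpr hh]

lemma Vval_of_lt (H : ℕ) (P : ℕ → S → A → S → ℝ) (π : ℕ → S → A → ℝ)
    (r : ℕ → S → A → ℝ) {h : ℕ} (s : S) (hh : h < H) :
    Vval H P π r h s
      = ∑ a, π h s a * (r h s a + ∑ s', P h s a s' * Vval H P π r (h + 1) s') := by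
  rw [Vval]; simp [hh]

lemma Qval_of_lt (H : ℕ) (P : ℕ → S → A → S → ℝ) (π : ℕ → S → A → ℝ)
    (r : ℕ → S → A → ℝ) {h : ℕ} (s : S) (a : A) (hh : h < H) :
    Qval H P π r h s a = r h s a + ∑ s', P h s a s' * Vval H P π r (h + 1) s' :=
  if_pos hh

lemma Qval_of_ge (H : ℕ) (P : ℕ → S → A → S → ℝ) (π : ℕ → S → A → ℝ)
    (r : ℕ → S → A → ℝ) {h : ℕ} (s : S) (a : A) (hh : H ≤ h) :
    Qval H P π r h s a = 0 :=
  if_neg (Nat.not_lt.mpr hh)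

lemma Vval_eq_sum_Qval (H : ℕ) (P : ℕ → S → A → S → ℝ) (π : ℕ → S → A → ℝ)
    (r : ℕ → S → A → ℝ) {h : ℕ} (s : S) (hh : h < H) :
    Vval H P π r h s = ∑ a, π h s a * Qval H P π r h s a := by
  rw [Vval_of_lt H P π r s hh]
  exact Finset.sum_congr rfl fun a _ => by rw [Qval_of_lt H P π r s a hh]

/-- Any two optimal policies have the same value function. -/
lemma value_eq_of_optimal (H : ℕ) (P : ℕ → S → A → S → ℝ) (r : ℕ → S → A → ℝ)
    {π π' : ℕ → S → A → ℝ} (hπ : IsPolicy π) (hπ' : IsPolicy π')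
    (ho : IsOptimal H P r π) (ho' : IsOptimal H P r π') :
    ∀ h s, Vval H P π r h s = Vval H P π' r h s := by
  refine downInd H (fun h => ∀ s, Vval H P π r h s = Vval H P π' r h s) ?_ ?_
  · intro h hh s; rw [Vval_of_ge H P π r s hh, Vval_of_ge H P π' r s hh]
  · intro h hh ih s
    have hQ : ∀ a, Qval H P π r h s a = Qval H P π' r h s a := by
      intro a
      rw [Qval_of_lt H P π r s a hh, Qval_of_lt H P π' r s a hh]
      congr 1
      exact Finset.sum_congr rfl fun s' _ => by rw [ih s']
    have key : ∀ (σ σ' : ℕ → S → A → ℝ), IsPolicy σ → IsOptimal H P r σ' →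
        (∀ a, Qval H P σ r h s a = Qval H P σ' r h s a) →
        Vval H P σ r h s ≤ Vval H P σ' r h s := by
      intro σ σ' hσ hoσ' hq
      rw [Vval_eq_sum_Qval H P σ r s hh]
      calc ∑ a, σ h s a * Qval H P σ r h s a
          ≤ ∑ a, σ h s a * Vval H P σ' r h s := by
            refine Finset.sum_le_sum fun a _ => ?_
            exact mul_le_mul_of_nonneg_left
              (by rw [hq a]; exact hoσ' h hh s a) ((hσ h s).1 a)
        _ = Vval H P σ' r h s := by rw [← Finset.sum_mul, (hσ h s).2, one_mul]
    exact le_antisymm (key π π' hπ ho' hQ) (key π' π hπ' ho fun a => (hQ a).symm)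

/-- Value transfer: if the one-step targets of `(P', r')` w.r.t. `V` coincide with
`Q1`, and `π` averages `Q1` back to `V`, then the value of `π` in `(P', r')` is `V`. -/
lemma value_transfer (H : ℕ) (P' : ℕ → S → A → S → ℝ) (r' : ℕ → S → A → ℝ)
    (V : ℕ → S → ℝ) (Q1 : ℕ → S → A → ℝ) {π : ℕ → S → A → ℝ}
    (hVtop : ∀ h s, H ≤ h → V h s = 0)
    (hr' : ∀ h, h < H → ∀ s a, r' h s a + ∑ s', P' h s a s' * V (h + 1) s' = Q1 h s a)
    (hQ : ∀ h, h < H → ∀ s, ∑ a, π h s a * Q1 h s a = V h s) :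
    ∀ h s, Vval H P' π r' h s = V h s := by
  refine downInd H (fun h => ∀ s, Vval H P' π r' h s = V h s) ?_ ?_
  · intro h hh s; rw [Vval_of_ge H P' π r' s hh, hVtop h s hh]
  · intro h hh ih s
    rw [Vval_of_lt H P' π r' s hh, ← hQ h hh s]
    refine Finset.sum_congr rfl fun a _ => ?_
    congr 1
    rw [← hr' h hh s a]
    congr 1
    exact Finset.sum_congr rfl fun s' _ => by rw [ih s']

/-- The key transfer construction between two MDP\R with the same expert. -/
lemma exists_transfer (H : ℕ) (P1 P2 : ℕ → S → A → S → ℝ)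
    (πE : ℕ → S → A → ℝ) (hπE : IsPolicy πE)
    (r1 : ℕ → S → A → ℝ) (hfeas1 : Feasible H P1 πE r1) :
    ∃ r2 : ℕ → S → A → ℝ, Feasible H P2 πE r2 ∧
      ∀ π, IsPolicy π → (IsOptimal H P1 r1 π ∨ IsOptimal H P2 r2 π) →
        ∀ h s, Vval H P1 π r1 h s = Vval H P1 πE r1 h s ∧
          Vval H P2 π r2 h s = Vval H P1 πE r1 h s := by
  set V : ℕ → S → ℝ := Vval H P1 πE r1 with hV
  set Q1 : ℕ → S → A → ℝ := Qval H P1 πE r1 with hQ1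
  set r2 : ℕ → S → A → ℝ :=
    fun h s a => Q1 h s a - ∑ s', P2 h s a s' * V (h + 1) s' with hr2def
  have hVtop : ∀ h s, H ≤ h → V h s = 0 := fun h s hh => Vval_of_ge H P1 πE r1 s hh
  have hr1 : ∀ h, h < H → ∀ s a,
      r1 h s a + ∑ s', P1 h s a s' * V (h + 1) s' = Q1 h s a := by
    intro h hh s a; rw [hQ1, Qval_of_lt H P1 πE r1 s a hh]
  have hr2 : ∀ h, h < H → ∀ s a,
      r2 h s a + ∑ s', P2 h s a s' * V (h + 1) s' = Q1 h s a := by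
    intro h hh s a; simp [hr2def]
  have hQE : ∀ h, h < H → ∀ s, ∑ a, πE h s a * Q1 h s a = V h s := by
    intro h hh s; rw [hV, Vval_eq_sum_Qval H P1 πE r1 s hh]
  -- expert's value in (P2, r2) is V
  have hVE2 : ∀ h s, Vval H P2 πE r2 h s = V h s :=
    value_transfer H P2 r2 V Q1 hVtop hr2 hQE
  have hfeas2 : Feasible H P2 πE r2 := by
    intro h hh s a
    have : Qval H P2 πE r2 h s a = Q1 h s a := by
      rw [Qval_of_lt H P2 πE r2 s a hh, ← hr2 h hh s a]
      congr 1
      exact Finset.sum_congr rfl fun s' _ => by rw [hVE2 (h + 1) s']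
    rw [this, hVE2 h s]
    exact hfeas1 h hh s a
  refine ⟨r2, hfeas2, ?_⟩
  rintro π hπ (hopt | hopt) h s
  · -- π optimal in (P1, r1)
    have hv1 : ∀ h s, Vval H P1 π r1 h s = V h s :=
      value_eq_of_optimal H P1 r1 hπ hπE hopt hfeas1
    have hQπ : ∀ h, h < H → ∀ s, ∑ a, π h s a * Q1 h s a = V h s := by
      intro h hh s
      rw [← hv1 h s, Vval_eq_sum_Qval H P1 π r1 s hh]
      refine Finset.sum_congr rfl fun a _ => ?_
      congr 1
      rw [Qval_of_lt H P1 π r1 s a hh, ← hr1 h hh s a]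
      congr 1
      exact Finset.sum_congr rfl fun s' _ => by rw [hv1 (h + 1) s']
    exact ⟨hv1 h s, value_transfer H P2 r2 V Q1 hVtop hr2 hQπ h s⟩
  · -- π optimal in (P2, r2)
    have hv2 : ∀ h s, Vval H P2 π r2 h s = V h s := by
      intro h s
      rw [value_eq_of_optimal H P2 r2 hπ hπE hopt hfeas2 h s, hVE2 h s]
    have hQπ : ∀ h, h < H → ∀ s, ∑ a, π h s a * Q1 h s a = V h s := by
      intro h hh s
      rw [← hv2 h s, Vval_eq_sum_Qval H P2 π r2 s hh]
      refine Finset.sum_congr rfl fun a _ => ?_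
      congr 1
      rw [Qval_of_lt H P2 π r2 s a hh, ← hr2 h hh s a]
      congr 1
      exact Finset.sum_congr rfl fun s' _ => by rw [hv2 (h + 1) s']
    exact ⟨value_transfer H P1 r1 V Q1 hVtop hr1 hQπ h s, hv2 h s⟩

/-- The zero reward is feasible for every IRL problem. -/
lemma zero_feasible (H : ℕ) (P : ℕ → S → A → S → ℝ) (πE : ℕ → S → A → ℝ)
    (hπE : IsPolicy πE) : Feasible H P πE (fun _ _ _ => 0) := by
  have hV : ∀ h s, Vval H P πE (fun _ _ _ => 0) h s = 0 := by
    refine downInd H (fun h => ∀ s, Vval H P πE (fun _ _ _ => 0) h s = 0) ?_ ?_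
    · intro h hh s; exact Vval_of_ge H P πE _ s hh
    · intro h hh ih s
      rw [Vval_of_lt H P πE _ s hh]
      simp [ih]
  intro h hh s a
  rw [hV h s, Qval_of_lt H P πE _ s a hh]
  simp [hV (h + 1)]

lemma Qval_congr_zero (H : ℕ) (P : ℕ → S → A → S → ℝ)
    {π π' : ℕ → S → A → ℝ} (r : ℕ → S → A → ℝ) (s : S) (a : A)
    (hv : ∀ s', Vval H P π r 1 s' = Vval H P π' r 1 s') :
    Qval H P π r 0 s a = Qval H P π' r 0 s a := by
  unfold Qval
  split
  · congr 1
    exact Finset.sum_congr rfl fun s' _ => by rw [hv s']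
  · rfl

end Aux

/-- for any two IRL problems `τ = (M, πE)` and
`τ̂ = (M̂, π̂E)` on the same spaces, if the expert policies coincide then
`D^L(τ, τ̂) = 0`, no matter how the transitions differ. -/
theorem DL_zero_of_same_expert {S A : Type*} [Fintype S] [Fintype A] (H : ℕ)
    (P Phat : ℕ → S → A → S → ℝ) (πE : ℕ → S → A → ℝ) (s1 : S)
    (hP : IsKernel P) (hPhat : IsKernel Phat) (hπE : IsPolicy πE) :
    DL H P Phat πE πE s1 = 0 := by
  classical
  haveI hAne : Nonempty A := by
    by_contra hcon
    rw [not_nonempty_iff] at hcon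
    have h1 := (hπE 0 s1).2
    rw [Finset.univ_eq_empty, Finset.sum_empty] at h1
    exact zero_ne_one h1
  haveI hRne : Nonempty {r : ℕ → S → A → ℝ // Feasible H P πE r} :=
    ⟨⟨_, zero_feasible H P πE hπE⟩⟩
  haveI hRhne : Nonempty {r : ℕ → S → A → ℝ // Feasible H Phat πE r} :=
    ⟨⟨_, zero_feasible H Phat πE hπE⟩⟩
  -- the inner double-sup-sup-sup is always nonnegative
  have hnonneg : ∀ (r rh : ℕ → S → A → ℝ),
      0 ≤ ⨆ πs : {π : ℕ → S → A → ℝ // IsPolicy π ∧ IsOptimal H P r π},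
          ⨆ πh : {π : ℕ → S → A → ℝ // IsPolicy π ∧ IsOptimal H Phat rh π},
            ⨆ a : A, |Qval H P πs.1 r 0 s1 a - Qval H P πh.1 r 0 s1 a| := by
    intro r rh
    exact Real.iSup_nonneg fun πs => Real.iSup_nonneg fun πh =>
      Real.iSup_nonneg fun a => abs_nonneg _
  -- the inner expression is zero whenever all the Q-differences vanish
  have hzero : ∀ (r rh : ℕ → S → A → ℝ)
      (hfr : Feasible H P πE r) (hfrh : Feasible H Phat πE rh),
      (∀ πs : {π : ℕ → S → A → ℝ // IsPolicy π ∧ IsOptimal H P r π},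
        ∀ πh : {π : ℕ → S → A → ℝ // IsPolicy π ∧ IsOptimal H Phat rh π},
          ∀ a : A, Qval H P πs.1 r 0 s1 a = Qval H P πh.1 r 0 s1 a) →
      (⨆ πs : {π : ℕ → S → A → ℝ // IsPolicy π ∧ IsOptimal H P r π},
          ⨆ πh : {π : ℕ → S → A → ℝ // IsPolicy π ∧ IsOptimal H Phat rh π},
            ⨆ a : A, |Qval H P πs.1 r 0 s1 a - Qval H P πh.1 r 0 s1 a|) = 0 := by
    intro r rh hfr hfrh hq
    haveI : Nonempty {π : ℕ → S → A → ℝ // IsPolicy π ∧ IsOptimal H P r π} :=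
      ⟨⟨πE, hπE, hfr⟩⟩
    haveI : Nonempty {π : ℕ → S → A → ℝ // IsPolicy π ∧ IsOptimal H Phat rh π} :=
      ⟨⟨πE, hπE, hfrh⟩⟩
    have e1 : ∀ πs : {π : ℕ → S → A → ℝ // IsPolicy π ∧ IsOptimal H P r π},
        (⨆ πh : {π : ℕ → S → A → ℝ // IsPolicy π ∧ IsOptimal H Phat rh π},
          ⨆ a : A, |Qval H P πs.1 r 0 s1 a - Qval H P πh.1 r 0 s1 a|) = 0 := by
      intro πs
      have e2 : ∀ πh : {π : ℕ → S → A → ℝ // IsPolicy π ∧ IsOptimal H Phat rh π},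
          (⨆ a : A, |Qval H P πs.1 r 0 s1 a - Qval H P πh.1 r 0 s1 a|) = 0 := by
        intro πh
        have e3 : ∀ a : A, |Qval H P πs.1 r 0 s1 a - Qval H P πh.1 r 0 s1 a| = 0 := by
          intro a; rw [hq πs πh a]; simp
        rw [iSup_congr e3]; exact ciSup_const
      rw [iSup_congr e2]; exact ciSup_const
    rw [iSup_congr e1]; exact ciSup_const
  -- first branch
  have hX : ∀ r : {r : ℕ → S → A → ℝ // Feasible H P πE r},
      (⨅ rh : {r : ℕ → S → A → ℝ // Feasible H Phat πE r},
        ⨆ πs : {π : ℕ → S → A → ℝ // IsPolicy π ∧ IsOptimal H P r.1 π},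
          ⨆ πh : {π : ℕ → S → A → ℝ // IsPolicy π ∧ IsOptimal H Phat rh.1 π},
            ⨆ a : A, |Qval H P πs.1 r.1 0 s1 a - Qval H P πh.1 r.1 0 s1 a|) = 0 := by
    rintro ⟨r, hfr⟩
    obtain ⟨r2, hfeas2, hval⟩ := exists_transfer H P Phat πE hπE r hfr
    have hq : ∀ πs : {π : ℕ → S → A → ℝ // IsPolicy π ∧ IsOptimal H P r π},
        ∀ πh : {π : ℕ → S → A → ℝ // IsPolicy π ∧ IsOptimal H Phat r2 π},
          ∀ a : A, Qval H P πs.1 r 0 s1 a = Qval H P πh.1 r 0 s1 a := by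
      intro πs πh a
      refine Qval_congr_zero H P r s1 a fun s' => ?_
      rw [(hval πs.1 πs.2.1 (Or.inl πs.2.2) 1 s').1,
        (hval πh.1 πh.2.1 (Or.inr πh.2.2) 1 s').1]
    refine le_antisymm ?_ (le_ciInf fun rh => hnonneg r rh.1)
    have hle := ciInf_le (f := fun rh : {r : ℕ → S → A → ℝ // Feasible H Phat πE r} =>
        ⨆ πs : {π : ℕ → S → A → ℝ // IsPolicy π ∧ IsOptimal H P r π},
          ⨆ πh : {π : ℕ → S → A → ℝ // IsPolicy π ∧ IsOptimal H Phat rh.1 π},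
            ⨆ a : A, |Qval H P πs.1 r 0 s1 a - Qval H P πh.1 r 0 s1 a|)
      (by exact ⟨0, by rintro x ⟨rh, rfl⟩; exact hnonneg r rh.1⟩) ⟨r2, hfeas2⟩
    calc _ ≤ _ := hle
      _ = 0 := hzero r r2 hfr hfeas2 hq
  -- second branch
  have hY : ∀ rh : {r : ℕ → S → A → ℝ // Feasible H Phat πE r},
      (⨅ r : {r : ℕ → S → A → ℝ // Feasible H P πE r},
        ⨆ πs : {π : ℕ → S → A → ℝ // IsPolicy π ∧ IsOptimal H P r.1 π},
          ⨆ πh : {π : ℕ → S → A → ℝ // IsPolicy π ∧ IsOptimal H Phat rh.1 π},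
            ⨆ a : A, |Qval H P πs.1 r.1 0 s1 a - Qval H P πh.1 r.1 0 s1 a|) = 0 := by
    rintro ⟨rh, hfrh⟩
    obtain ⟨r2, hfeas2, hval⟩ := exists_transfer H Phat P πE hπE rh hfrh
    have hq : ∀ πs : {π : ℕ → S → A → ℝ // IsPolicy π ∧ IsOptimal H P r2 π},
        ∀ πh : {π : ℕ → S → A → ℝ // IsPolicy π ∧ IsOptimal H Phat rh π},
          ∀ a : A, Qval H P πs.1 r2 0 s1 a = Qval H P πh.1 r2 0 s1 a := by
      intro πs πh a
      refine Qval_congr_zero H P r2 s1 a fun s' => ?_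
      rw [(hval πs.1 πs.2.1 (Or.inr πs.2.2) 1 s').2,
        (hval πh.1 πh.2.1 (Or.inl πh.2.2) 1 s').2]
    refine le_antisymm ?_ (le_ciInf fun r => hnonneg r.1 rh)
    have hle := ciInf_le (f := fun r : {r : ℕ → S → A → ℝ // Feasible H P πE r} =>
        ⨆ πs : {π : ℕ → S → A → ℝ // IsPolicy π ∧ IsOptimal H P r.1 π},
          ⨆ πh : {π : ℕ → S → A → ℝ // IsPolicy π ∧ IsOptimal H Phat rh π},
            ⨆ a : A, |Qval H P πs.1 r.1 0 s1 a - Qval H P πh.1 r.1 0 s1 a|)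
      (by exact ⟨0, by rintro x ⟨r, rfl⟩; exact hnonneg r.1 rh⟩) ⟨r2, hfeas2⟩
    calc _ ≤ _ := hle
      _ = 0 := hzero r2 rh hfeas2 hfrh hq
  rw [DL, iSup_congr hX, iSup_congr hY, ciSup_const, ciSup_const, max_self]


end IRL
end

section
/- Framework learning bound for offline IRL: let (M, π^E) be an IRL problem with ground-truth reward mapping R★, and suppose we are given estimates P̂_h of the transitions, an estimated expert policy π̂^E, and bonus functions b^θ_h : S×A → ℝ_{≥0} for θ ∈ Θ such that (i) |[(P_h − P̂_h)V_{h+1}](s,a)| ≤ b^θ_h(s,a) for every θ = (V,A) ∈ Θ and every (h,s,a), and (ii) supp(π̂^E_h(·|s)) ⊆ supp(π^E_h(·|s)) for all (h,s). Define the estimated reward mapping by [R̂(V,A)]_h(s,a) = −A_h(s,a)·1{a ∉ supp(π̂^E_h(·|s))} + V_h(s) − [P̂_h V_{h+1}](s,a) − b^θ_h(s,a). Then [R̂(V,A)]_h(s,a) ≤ [R★(V,A)]_h(s,a) for all (V,A) ∈ Θ and (h,s,a), and for every policy π^eval, D^{π^eval}_Θ(R★, R̂) ≤ sup_{θ∈Θ}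 { H·Σ_{h=1}^H E_{(s,a)∼d^{π^eval}_h}[1{a ∈ supp(π^E_h(·|s)) and a ∉ supp(π̂^E_h(·|s))}] + 2·Σ_{h=1}^H E_{(s,a)∼d^{π^eval}_h}[b^θ_h(s,a)] }. -/
open Finset
open scoped Classical ENNReal NNReal

namespace IRL

section Aux
variable {S A : Type*} [Fintype S] [Fintype A]

lemma triple_sum (f : S → ℝ) (g : S → A → ℝ) (x : S → A → ℝ) (p : S → A → S → ℝ) (y : S → ℝ) :
    ∑ s, f s * ∑ a, g s a * (x s a + ∑ s', p s a s' * y s') =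
      (∑ s, ∑ a, f s * g s a * x s a) +
        ∑ s', (∑ s, ∑ a, f s * g s a * p s a s') * y s' := by
  simp only [Finset.mul_sum, Finset.sum_mul, mul_add, Finset.sum_add_distrib]
  congr 1
  · exact Finset.sum_congr rfl fun s _ => Finset.sum_congr rfl fun a _ => by ring
  · rw [Finset.sum_comm (f := fun x x_1 => ∑ i : A, f x_1 * g x_1 i * p x_1 i x * y x)]
    refine Finset.sum_congr rfl fun s _ => ?_
    rw [Finset.sum_comm (f := fun x i => f s * g s i * p s i x * y x)]
    exact Finset.sum_congr rfl fun a _ => Finset.sum_congr rfl fun s' _ => by ring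

lemma Vval_sub_eq (H : ℕ) (P : ℕ → S → A → S → ℝ) (π r r' : ℕ → S → A → ℝ) {h : ℕ}
    (hh : h < H) (s : S) :
    Vval H P π r h s - Vval H P π r' h s =
      ∑ a, π h s a * ((r h s a - r' h s a) +
        ∑ s', P h s a s' * (Vval H P π r (h + 1) s' - Vval H P π r' (h + 1) s')) := by
  rw [Vval, Vval, dif_pos hh, dif_pos hh, ← Finset.sum_sub_distrib]
  refine Finset.sum_congr rfl fun a _ => ?_
  simp only [mul_sub, Finset.sum_sub_distrib]
  ring

lemma Vval_stop (H : ℕ) (P : ℕ → S → A → S → ℝ) (π r : ℕ → S → A → ℝ) {h : ℕ}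
    (hh : ¬ h < H) (s : S) : Vval H P π r h s = 0 := by rw [Vval, dif_neg hh]

lemma Vval_diff_nonneg (H : ℕ) (P : ℕ → S → A → S → ℝ) (π r r' : ℕ → S → A → ℝ)
    (hP : ∀ h s a s', 0 ≤ P h s a s') (hπ : ∀ h s a, 0 ≤ π h s a)
    (hr : ∀ h, h < H → ∀ s a, r' h s a ≤ r h s a) (h : ℕ) (s : S) :
    0 ≤ Vval H P π r h s - Vval H P π r' h s := by
  by_cases hh : h < H
  · rw [Vval_sub_eq H P π r r' hh]
    refine Finset.sum_nonneg fun a _ => mul_nonneg (hπ _ _ _) (add_nonneg ?_ ?_)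
    · exact sub_nonneg.mpr (hr h hh s a)
    · exact Finset.sum_nonneg fun s' _ => mul_nonneg (hP _ _ _ _)
        (Vval_diff_nonneg H P π r r' hP hπ hr (h + 1) s')
  · rw [Vval_stop H P π r hh, Vval_stop H P π r' hh]; simp
termination_by H - h
decreasing_by omega

lemma dvisit_nonneg (P : ℕ → S → A → S → ℝ) (π : ℕ → S → A → ℝ) (s1 : S)
    (hP : ∀ h s a s', 0 ≤ P h s a s') (hπ : ∀ h s a, 0 ≤ π h s a) :
    ∀ h s, 0 ≤ dvisit P π s1 h s := by
  intro h
  induction h with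
  | zero => intro s; simp only [dvisit]; positivity
  | succ h ih =>
    intro s'
    exact Finset.sum_nonneg fun s _ => Finset.sum_nonneg fun a _ =>
      mul_nonneg (mul_nonneg (ih s) (hπ _ _ _)) (hP _ _ _ _)

lemma telescope (H : ℕ) (P : ℕ → S → A → S → ℝ) (π r r' : ℕ → S → A → ℝ) (s1 : S) (h : ℕ) :
    ∑ s, dvisit P π s1 h s * (Vval H P π r h s - Vval H P π r' h s) =
      ∑ h' ∈ Finset.Ico h H, ∑ s, ∑ a,
        dvisit P π s1 h' s * π h' s a * (r h' s a - r' h' s a) := by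
  by_cases hh : h < H
  · rw [Finset.sum_eq_sum_Ico_succ_bot hh, ← telescope H P π r r' s1 (h + 1)]
    have key := triple_sum (dvisit P π s1 h) (π h)
      (fun s a => r h s a - r' h s a) (P h)
      (fun s' => Vval H P π r (h + 1) s' - Vval H P π r' (h + 1) s')
    calc ∑ s, dvisit P π s1 h s * (Vval H P π r h s - Vval H P π r' h s)
        = ∑ s, dvisit P π s1 h s * ∑ a, π h s a * ((r h s a - r' h s a) +
            ∑ s', P h s a s' * (Vval H P π r (h + 1) s' - Vval H P π r' (h + 1) s')) :=
          Finset.sum_congr rfl fun s _ => by rw [Vval_sub_eq H P π r r' hh]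
      _ = (∑ s, ∑ a, dvisit P π s1 h s * π h s a * (r h s a - r' h s a)) +
          ∑ s', (∑ s, ∑ a, dvisit P π s1 h s * π h s a * P h s a s') *
            (Vval H P π r (h + 1) s' - Vval H P π r' (h + 1) s') := key
      _ = _ := by congr 1
  · rw [Finset.Ico_eq_empty (by omega), Finset.sum_empty]
    refine Finset.sum_eq_zero fun s _ => ?_
    rw [Vval_stop H P π r hh, Vval_stop H P π r' hh]; simp

end Aux

/-- framework learning bound for offline IRL: given
estimates `P̂, π̂E` and bonuses `b` satisfying the two framework conditions,
the pessimistic reward mapping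
`[R̂(V,A)]_h(s,a) = -A_h(s,a)·1{a ∉ supp π̂E} + V_h(s) - [P̂_h V_{h+1}](s,a) - b^θ_h(s,a)`
is pointwise below `R★`, and for every evaluation policy its `d^{π^eval}`
error is controlled by the support mismatch plus twice the expected bonus. -/
theorem framework_offline_IRL {S A : Type*} [Fintype S] [Fintype A] (H : ℕ)
    (P Phat : ℕ → S → A → S → ℝ) (πE πEhat : ℕ → S → A → ℝ) (s1 : S)
    (Θ : Set ((ℕ → S → ℝ) × (ℕ → S → A → ℝ)))
    (b : ((ℕ → S → ℝ) × (ℕ → S → A → ℝ)) → ℕ → S → A → ℝ)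
    (hP : IsKernel P) (hπE : IsPolicy πE)
    (hΘ : Θ ⊆ Vbar S H ×ˢ Abar S A H)
    (hb : ∀ θ h s a, 0 ≤ b θ h s a)
    (hi : ∀ V Adv, (V, Adv) ∈ Θ → ∀ h, h < H → ∀ s a,
      |(∑ s', P h s a s' * V (h + 1) s') - ∑ s', Phat h s a s' * V (h + 1) s'| ≤
        b (V, Adv) h s a)
    (hii : ∀ h, h < H → ∀ s a, πEhat h s a ≠ 0 → πE h s a ≠ 0) :
    (∀ V Adv, (V, Adv) ∈ Θ → ∀ h, h < H → ∀ s a,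
      RStar Phat πEhat V Adv h s a - b (V, Adv) h s a ≤ RStar P πE V Adv h s a) ∧
    (∀ πeval, IsPolicy πeval → ∀ V Adv, (V, Adv) ∈ Θ →
      dpiLe H P πeval s1 (RStar P πE V Adv)
        (fun h s a => RStar Phat πEhat V Adv h s a - b (V, Adv) h s a)
        ((H : ℝ) * (∑ h ∈ Finset.range H, ∑ s, ∑ a,
            dvisitSA P πeval s1 h s a *
              (if πE h s a ≠ 0 ∧ πEhat h s a = 0 then 1 else 0)) +
          2 * ∑ h ∈ Finset.range H, ∑ s, ∑ a,
            dvisitSA P πeval s1 h s a * b (V, Adv) h s a)) := by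
  -- pointwise bounds on the reward gap
  have hbound : ∀ V Adv, (V, Adv) ∈ Θ → ∀ h, h < H → ∀ s a,
      RStar Phat πEhat V Adv h s a - b (V, Adv) h s a ≤ RStar P πE V Adv h s a ∧
      RStar P πE V Adv h s a - (RStar Phat πEhat V Adv h s a - b (V, Adv) h s a) ≤
        (H : ℝ) * (if πE h s a ≠ 0 ∧ πEhat h s a = 0 then 1 else 0) +
          2 * b (V, Adv) h s a := by
    intro V Adv hmem h hh s a
    have hA : Adv ∈ Abar S A H := (hΘ hmem).2
    have hAdv := hA h s a
    have habs := hi V Adv hmem h hh s a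
    obtain ⟨hb1, hb2⟩ := abs_le.mp habs
    have hAH : Adv h s a ≤ (H : ℝ) :=
      le_trans hAdv.2 (by exact_mod_cast Nat.sub_le H h)
    have hi12 : (if πE h s a = 0 then (1:ℝ) else 0) ≤
        (if πEhat h s a = 0 then 1 else 0) := by
      by_cases h1 : πE h s a = 0
      · have h2 : πEhat h s a = 0 := by
          by_contra hc; exact (hii h hh s a hc) h1
        simp [h1, h2]
      · simp only [if_neg h1]
        split <;> norm_num
    have hprod : Adv h s a * (if πE h s a = 0 then (1:ℝ) else 0) ≤
        Adv h s a * (if πEhat h s a = 0 then 1 else 0) :=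
      mul_le_mul_of_nonneg_left hi12 hAdv.1
    have hind : (if πEhat h s a = 0 then (1:ℝ) else 0) -
        (if πE h s a = 0 then 1 else 0) =
        (if πE h s a ≠ 0 ∧ πEhat h s a = 0 then 1 else 0) := by
      by_cases h1 : πE h s a = 0
      · have h2 : πEhat h s a = 0 := by
          by_contra hc; exact (hii h hh s a hc) h1
        simp [h1, h2]
      · by_cases h2 : πEhat h s a = 0 <;> simp [h1, h2]
    constructor
    · simp only [RStar]
      linarith
    · have hmul : Adv h s a * ((if πEhat h s a = 0 then (1:ℝ) else 0) -
          (if πE h s a = 0 then 1 else 0)) ≤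
          (H : ℝ) * (if πE h s a ≠ 0 ∧ πEhat h s a = 0 then 1 else 0) := by
        rw [hind]
        refine mul_le_mul_of_nonneg_right hAH ?_
        split <;> norm_num
      rw [mul_sub] at hmul
      simp only [RStar]
      linarith
  refine ⟨fun V Adv hmem h hh s a => (hbound V Adv hmem h hh s a).1, ?_⟩
  intro πeval hπev V Adv hmem
  have hPnn : ∀ h s a s', 0 ≤ P h s a s' := fun h s a s' => (hP h s a).1 s'
  have hπnn : ∀ h s a, 0 ≤ πeval h s a := fun h s a => (hπev h s).1 a
  have hle : ∀ h', h' < H → ∀ s a,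
      RStar Phat πEhat V Adv h' s a - b (V, Adv) h' s a ≤ RStar P πE V Adv h' s a :=
    fun h' hh' s a => (hbound V Adv hmem h' hh' s a).1
  have hdnn := dvisit_nonneg P πeval s1 hPnn hπnn
  intro h hh
  set r : ℕ → S → A → ℝ := RStar P πE V Adv with hr
  set r' : ℕ → S → A → ℝ :=
    fun h s a => RStar Phat πEhat V Adv h s a - b (V, Adv) h s a with hr'
  have hle' : ∀ h', h' < H → ∀ s a, r' h' s a ≤ r h' s a := hle
  have hD := Vval_diff_nonneg H P πeval r r' hPnn hπnn hle'
  have hT : ∀ h', h' < H → ∀ s : S, ∀ a : A,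
      0 ≤ dvisit P πeval s1 h' s * πeval h' s a * (r h' s a - r' h' s a) :=
    fun h' hh' s a => mul_nonneg (mul_nonneg (hdnn h' s) (hπnn h' s a))
      (sub_nonneg.mpr (hle' h' hh' s a))
  calc ∑ s, dvisit P πeval s1 h s * |Vval H P πeval r h s - Vval H P πeval r' h s|
      = ∑ s, dvisit P πeval s1 h s * (Vval H P πeval r h s - Vval H P πeval r' h s) :=
        Finset.sum_congr rfl fun s _ => by rw [abs_of_nonneg (hD h s)]
    _ = ∑ h' ∈ Finset.Ico h H, ∑ s, ∑ a,
          dvisit P πeval s1 h' s * πeval h' s a * (r h' s a - r' h' s a) :=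
        telescope H P πeval r r' s1 h
    _ ≤ ∑ h' ∈ Finset.range H, ∑ s, ∑ a,
          dvisit P πeval s1 h' s * πeval h' s a * (r h' s a - r' h' s a) := by
        rw [Finset.range_eq_Ico]
        refine Finset.sum_le_sum_of_subset_of_nonneg
          (Finset.Ico_subset_Ico (Nat.zero_le h) le_rfl) ?_
        intro h' hm' _
        have hh' : h' < H := (Finset.mem_Ico.mp hm').2
        exact Finset.sum_nonneg fun s _ => Finset.sum_nonneg fun a _ => hT h' hh' s a
    _ ≤ ∑ h' ∈ Finset.range H,
          ((H : ℝ) * (∑ s, ∑ a, dvisitSA P πeval s1 h' s a *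
              (if πE h' s a ≠ 0 ∧ πEhat h' s a = 0 then 1 else 0)) +
            2 * ∑ s, ∑ a, dvisitSA P πeval s1 h' s a * b (V, Adv) h' s a) := by
        refine Finset.sum_le_sum fun h' hm' => ?_
        have hh' : h' < H := Finset.mem_range.mp hm'
        have step : ∀ s : S, ∀ a : A,
            dvisit P πeval s1 h' s * πeval h' s a * (r h' s a - r' h' s a) ≤
              (H : ℝ) * (dvisitSA P πeval s1 h' s a *
                  (if πE h' s a ≠ 0 ∧ πEhat h' s a = 0 then 1 else 0)) +
                2 * (dvisitSA P πeval s1 h' s a * b (V, Adv) h' s a) := by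
          intro s a
          have hδ := (hbound V Adv hmem h' hh' s a).2
          have hdp : 0 ≤ dvisit P πeval s1 h' s * πeval h' s a :=
            mul_nonneg (hdnn h' s) (hπnn h' s a)
          calc dvisit P πeval s1 h' s * πeval h' s a * (r h' s a - r' h' s a)
              ≤ dvisit P πeval s1 h' s * πeval h' s a *
                  ((H : ℝ) * (if πE h' s a ≠ 0 ∧ πEhat h' s a = 0 then 1 else 0) +
                    2 * b (V, Adv) h' s a) := mul_le_mul_of_nonneg_left hδ hdp
            _ = _ := by simp only [dvisitSA]; ring
        calc ∑ s, ∑ a, dvisit P πeval s1 h' s * πeval h' s a * (r h' s a - r' h' s a)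
            ≤ ∑ s, ∑ a, ((H : ℝ) * (dvisitSA P πeval s1 h' s a *
                  (if πE h' s a ≠ 0 ∧ πEhat h' s a = 0 then 1 else 0)) +
                2 * (dvisitSA P πeval s1 h' s a * b (V, Adv) h' s a)) :=
              Finset.sum_le_sum fun s _ => Finset.sum_le_sum fun a _ => step s a
          _ = _ := by
              simp only [Finset.sum_add_distrib, Finset.mul_sum]
    _ = (H : ℝ) * (∑ h' ∈ Finset.range H, ∑ s, ∑ a,
            dvisitSA P πeval s1 h' s a *
              (if πE h' s a ≠ 0 ∧ πEhat h' s a = 0 then 1 else 0)) +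
          2 * ∑ h' ∈ Finset.range H, ∑ s, ∑ a,
            dvisitSA P πeval s1 h' s a * b (V, Adv) h' s a := by
        rw [Finset.sum_add_distrib, ← Finset.mul_sum, ← Finset.mul_sum]


end IRL
end
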